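/- arXiv:2212.00437 — 3 statements merged into one kernel-verified Lean document; each statement's English description precedes it below -/
import Mathlib

section
/- Let R be a Frobenius algebra over a field k equipped with an algebra augmentation ε : R → k. Then the space of left integrals ∫^l_R = {h ∈ R : yh = ε(y)h for all y ∈ R} is one-dimensional over k, and similarly for right integrals. -/
/-- A linear functional `φ : R → k` is a Frobenius form if the associated bilinear form
`(a, b) ↦ φ (a * b)` is nondegenerate on both sides. -/
def IsFrobeniusForm (k : Type*) {R : Type*} [Field k] [Ring R] [Algebra k R]
    (φ : R →ₗ[k] k) : Prop :=
  (∀ a : R, a ≠ 0 → ∃ b : R, φ (a * b) ≠ 0) ∧ (∀ a : R, a ≠ 0 → ∃ b : R, φ (b * a) ≠ 0)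

variable {k R : Type*} [Field k] [Ring R] [Algebra k R]

/-- The `k`-subspace of left integrals of an augmented algebra `ε : R → k`:
elements `h` with `y * h = ε(y) • h` for all `y`. -/
def leftIntegrals (ε : R →ₐ[k] k) : Submodule k R where
  carrier := {h : R | ∀ y : R, y * h = ε y • h}
  add_mem' := by
    intro a b ha hb y
    simp [mul_add, ha y, hb y, smul_add]
  zero_mem' := by intro y; simp
  smul_mem' := by
    intro c x hx y
    rw [mul_smul_comm, hx y, smul_comm]

/-- The `k`-subspace of right integrals of an augmented algebra `ε : R → k`:
elements `h` with `h * y = ε(y) • h` for all `y`. -/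
def rightIntegrals (ε : R →ₐ[k] k) : Submodule k R where
  carrier := {h : R | ∀ y : R, h * y = ε y • h}
  add_mem' := by
    intro a b ha hb y
    simp [add_mul, ha y, hb y, smul_add]
  zero_mem' := by intro y; simp
  smul_mem' := by
    intro c x hx y
    rw [smul_mul_assoc, hx y, smul_comm]

/-!
A form `φ` with `φ (b * a) = 0` for all `b` only when `a = 0` makes `h ↦ φ (· * h)` a linear
isomorphism `R ≃ R*`, as `R` is finite-dimensional. It carries the left integrals onto the line
`k ∙ ε`: if `h` is a left integral then `φ (x * h) = ε x * φ h`, and conversely if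
`φ (· * h) = c • ε` then `φ (x * (y * h)) = c * ε x * ε y = φ (x * (ε y • h))` for all `x`, so
`y * h = ε y • h` by injectivity. Right integrals of `R` are the left integrals of `Rᵐᵒᵖ`.
-/

open Module MulOpposite

section FrobeniusDual

variable (φ : R →ₗ[k] k)

def frobeniusDualMap : R →ₗ[k] Dual k R :=
  (LinearMap.llcomp k R R k φ).comp (LinearMap.mul k R).flip

@[simp]
theorem frobeniusDualMap_apply (h x : R) : frobeniusDualMap φ h x = φ (x * h) := rfl

theorem frobeniusDualMap_mul (y h : R) :
    frobeniusDualMap φ (y * h) = (frobeniusDualMap φ h).comp (LinearMap.mulRight k y) := by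
  ext x
  simp [mul_assoc]

variable {φ}

theorem frobeniusDualMap_injective (hφ : ∀ a : R, a ≠ 0 → ∃ b : R, φ (b * a) ≠ 0) :
    Function.Injective (frobeniusDualMap φ) := by
  rw [← LinearMap.ker_eq_bot, LinearMap.ker_eq_bot']
  intro h hh
  by_contra hne
  obtain ⟨b, hb⟩ := hφ h hne
  exact hb (LinearMap.congr_fun hh b)

theorem frobeniusDualMap_mem_span_iff (hφ : ∀ a : R, a ≠ 0 → ∃ b : R, φ (b * a) ≠ 0)
    (ε : R →ₐ[k] k) {h : R} :
    frobeniusDualMap φ h ∈ k ∙ ε.toLinearMap ↔ h ∈ leftIntegrals ε := by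
  refine ⟨fun hmem y => ?_, fun hh => ?_⟩
  · obtain ⟨c, hc⟩ := Submodule.mem_span_singleton.mp hmem
    apply frobeniusDualMap_injective hφ
    ext x
    simp [frobeniusDualMap_mul, ← hc, mul_left_comm, mul_comm]
  · refine Submodule.mem_span_singleton.mpr ⟨φ h, ?_⟩
    ext x
    simp [hh x, mul_comm]

theorem finrank_leftIntegrals_eq_one [FiniteDimensional k R]
    (hφ : ∀ a : R, a ≠ 0 → ∃ b : R, φ (b * a) ≠ 0) (ε : R →ₐ[k] k) :
    finrank k (leftIntegrals ε) = 1 := by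
  let e : R ≃ₗ[k] Dual k R := LinearMap.linearEquivOfInjective _
    (frobeniusDualMap_injective hφ) Subspace.dual_finrank_eq.symm
  have hcomap : leftIntegrals ε = (k ∙ ε.toLinearMap).comap e.toLinearMap := by
    ext h
    exact (frobeniusDualMap_mem_span_iff hφ ε).symm
  have hε : ε.toLinearMap ≠ 0 := fun h₀ =>
    one_ne_zero (α := k) (by simpa using LinearMap.congr_fun h₀ 1)
  rw [hcomap, Submodule.comap_equiv_eq_map_symm, e.symm.finrank_map_eq, finrank_span_singleton hε]

end FrobeniusDual

theorem map_op_rightIntegrals (ε : R →ₐ[k] k) :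
    (rightIntegrals ε).map (opLinearEquiv k : R ≃ₗ[k] Rᵐᵒᵖ).toLinearMap =
      leftIntegrals (ε.fromOpposite fun _ _ => Commute.all _ _) := by
  ext x
  rw [Submodule.mem_map_equiv]
  change (∀ y : R, x.unop * y = ε y • x.unop) ↔ ∀ y : Rᵐᵒᵖ, y * x = ε y.unop • x
  exact ⟨fun hx y => unop_injective (hx y.unop), fun hx y => congrArg unop (hx (op y))⟩

theorem finrank_rightIntegrals_eq_one [FiniteDimensional k R] {φ : R →ₗ[k] k}
    (hφ : ∀ a : R, a ≠ 0 → ∃ b : R, φ (a * b) ≠ 0) (ε : R →ₐ[k] k) :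
    finrank k (rightIntegrals ε) = 1 := by
  let φop : Rᵐᵒᵖ →ₗ[k] k := φ ∘ₗ (opLinearEquiv k).symm.toLinearMap
  have hφop : ∀ a : Rᵐᵒᵖ, a ≠ 0 → ∃ b : Rᵐᵒᵖ, φop (b * a) ≠ 0 := fun a ha =>
    let ⟨b, hb⟩ := hφ a.unop ((unop_ne_zero_iff a).mpr ha)
    ⟨op b, hb⟩
  rw [← (opLinearEquiv k).finrank_map_eq, map_op_rightIntegrals,
    finrank_leftIntegrals_eq_one hφop]

/-- For an augmented Frobenius algebra `R` over a field `k`, the spaces of left and right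
integrals with respect to the augmentation are one-dimensional over `k`. -/
theorem integrals_one_dimensional
    [FiniteDimensional k R]
    (hF : ∃ φ : R →ₗ[k] k, IsFrobeniusForm k φ)
    (ε : R →ₐ[k] k) :
    Module.finrank k (leftIntegrals ε) = 1 ∧
    Module.finrank k (rightIntegrals ε) = 1 := by
  obtain ⟨φ, hφ₁, hφ₂⟩ := hF
  exact ⟨finrank_leftIntegrals_eq_one hφ₂ ε, finrank_rightIntegrals_eq_one hφ₁ ε⟩
end

section
/- Let A be a locally Frobenius algebra over a field k. Then every nonzero finitely presented (coherent) left A-module M is infinite dimensional as a k-vector space. Consequently no nonzero finite-dimensional A-module is coherent. -/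
/-- A *locally Frobenius algebra* of shape a directed set: `A` is the directed union of
finite-dimensional augmented symmetric Frobenius subalgebras `sub i`, with `sub i₀ = k`,
such that each extension `sub j : sub i` (for `i ≤ j`) is free of finite rank as a left and
as a right module, and the dimensions of the subalgebras are unbounded. -/
structure LocallyFrobeniusAlgebra (k A : Type*) [Field k] [Ring A] [Algebra k A] where
  /-- the directed index set -/
  ι : Type
  /-- the (pre)order relation on the index set -/
  le : ι → ι → Prop
  le_refl : ∀ i, le i i
  le_trans : ∀ i j l, le i j → le j l → le i l
  /-- the index set is directed -/
  directed : ∀ i j, ∃ m, le i m ∧ le j m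
  /-- the filtration by finite-dimensional subalgebras -/
  sub : ι → Subalgebra k A
  mono : ∀ i j, le i j → sub i ≤ sub j
  /-- every element of `A` lies in some subalgebra of the family -/
  exhaustive : ∀ a : A, ∃ i, a ∈ sub i
  findim : ∀ i, FiniteDimensional k (sub i)
  /-- there is an initial index, with corresponding subalgebra `k` -/
  bot : ∃ i₀, (∀ i, le i₀ i) ∧ sub i₀ = ⊥
  /-- each subalgebra carries a symmetric Frobenius form -/
  frob : ∀ i, ∃ φ : (sub i) →ₗ[k] k,
    (∀ a b : sub i, φ (a * b) = φ (b * a)) ∧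
    (∀ a : sub i, a ≠ 0 → ∃ b : sub i, φ (a * b) ≠ 0)
  /-- a global augmentation, restricting to an augmentation of each subalgebra -/
  aug : A →ₐ[k] k
  /-- for `i ≤ j`, `sub j` is free of finite rank as a left `sub i`-module -/
  free_left : ∀ i j, le i j → ∃ (n : ℕ) (b : Fin n → A), (∀ t, b t ∈ sub j) ∧
    ∀ x ∈ sub j, ∃! c : Fin n → A, (∀ t, c t ∈ sub i) ∧ x = ∑ t, c t * b t
  /-- for `i ≤ j`, `sub j` is free of finite rank as a right `sub i`-module -/
  free_right : ∀ i j, le i j → ∃ (n : ℕ) (b : Fin n → A), (∀ t, b t ∈ sub j) ∧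
    ∀ x ∈ sub j, ∃! c : Fin n → A, (∀ t, c t ∈ sub i) ∧ x = ∑ t, b t * c t
  /-- the dimensions of the subalgebras in the family are unbounded -/
  unbounded : ∀ i, ∀ n : ℕ, ∃ j, le i j ∧ n < Module.finrank k (sub j)

namespace LocallyFrobAux

open Module LinearMap Finset

variable {k A : Type*} [Field k] [Ring A] [Algebra k A]

/-- `c ↦ (p ↦ ∑ s, c s * g s p)`, the "relation combination" map. -/
def psiMap (S : Subalgebra k A) {n m : ℕ} (g : Fin m → (Fin n → A)) :
    (Fin m → S) →ₗ[k] (Fin n → A) where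
  toFun c := fun p => ∑ s, (c s : A) * g s p
  map_add' c c' := by
    funext p
    simp [add_mul, Finset.sum_add_distrib]
  map_smul' α c := by
    funext p
    simp [Finset.smul_sum, smul_mul_assoc]

lemma psiMap_apply (S : Subalgebra k A) {n m : ℕ} (g : Fin m → (Fin n → A))
    (c : Fin m → S) (p : Fin n) : psiMap S g c p = ∑ s, (c s : A) * g s p := rfl

/-- `c ↦ (p ↦ c p)`, the inclusion of `S^n` into `A^n`. -/
def phiMap (S : Subalgebra k A) (n : ℕ) : (Fin n → S) →ₗ[k] (Fin n → A) where
  toFun c := fun p => (c p : A)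
  map_add' c c' := by funext p; simp
  map_smul' α c := by funext p; simp

lemma mem_range_phiMap {S : Subalgebra k A} {n : ℕ} {x : Fin n → A} :
    x ∈ LinearMap.range (phiMap (k := k) S n) ↔ ∀ p, x p ∈ S := by
  constructor
  · rintro ⟨c, rfl⟩ p; exact (c p).2
  · intro h; exact ⟨fun p => ⟨x p, h p⟩, rfl⟩

lemma finrank_range_phiMap (S : Subalgebra k A) [FiniteDimensional k S] (n : ℕ) :
    Module.finrank k (LinearMap.range (phiMap (k := k) S n)) = n * Module.finrank k S := by
  have hinj : Function.Injective (phiMap (k := k) S n) := by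
    intro c c' h
    funext p
    exact Subtype.ext (congrFun h p)
  rw [LinearMap.finrank_range_of_inj hinj, Module.finrank_pi_fintype,
    Finset.sum_const, Finset.card_univ, Fintype.card_fin, smul_eq_mul]

end LocallyFrobAux
namespace LocallyFrobAux

open Module LinearMap Finset

variable {k A : Type*} [Field k] [Ring A] [Algebra k A]

/-- The Frobenius projection: given a finite-dimensional subalgebra `S` carrying a
nondegenerate trace form, there is a `k`-linear map `P : A → A` with values in `S`,
restricting to the identity on `S`, and right-`S`-linear. -/
lemma exists_proj (S : Subalgebra k A) [FiniteDimensional k S] (φ : S →ₗ[k] k)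
    (hnd : ∀ a : S, a ≠ 0 → ∃ b : S, φ (a * b) ≠ 0) :
    ∃ P : A →ₗ[k] A, (∀ y ∈ S, P y = y) ∧ (∀ x, P x ∈ S) ∧
      ∀ (x : A), ∀ c ∈ S, P (x * c) = P x * c := by
  classical
  let B : S →ₗ[k] Module.Dual k S :=
    LinearMap.mk₂ k (fun a b : S => φ (a * b))
      (fun a a' b => by simp only [add_mul, map_add])
      (fun α a b => by simp only [smul_mul_assoc, map_smul])
      (fun a b b' => by simp only [mul_add, map_add])
      (fun α a b => by simp only [mul_smul_comm, map_smul])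
  have hB : ∀ a b : S, B a b = φ (a * b) := fun a b => rfl
  have hBinj : Function.Injective B := by
    intro a a' h
    by_contra hne
    have h0 : a - a' ≠ 0 := sub_ne_zero.mpr hne
    obtain ⟨b, hb⟩ := hnd _ h0
    apply hb
    have he : φ (a * b) = φ (a' * b) := by
      have := DFunLike.congr_fun h b
      rwa [hB, hB] at this
    rw [sub_mul, map_sub, he, sub_self]
  have hBsurj : Function.Surjective B := by
    rw [← LinearMap.range_eq_top]
    apply Submodule.eq_top_of_finrank_eq
    rw [LinearMap.finrank_range_of_inj hBinj, Subspace.dual_finrank_eq]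
  let E := LinearEquiv.ofBijective B ⟨hBinj, hBsurj⟩
  obtain ⟨f, hf⟩ := LinearMap.exists_extend (p := Subalgebra.toSubmodule S) φ
  have hf' : ∀ y : S, f (y : A) = φ y := fun y => DFunLike.congr_fun hf y
  let T : A →ₗ[k] Module.Dual k S :=
    LinearMap.mk₂ k (fun (x : A) (a : S) => f (x * (a : A)))
      (fun x x' a => by simp only [add_mul, map_add])
      (fun α x a => by simp only [smul_mul_assoc, map_smul])
      (fun x a a' => by simp only [AddMemClass.coe_add, mul_add, map_add])
      (fun α x a => by simp only [SetLike.val_smul, mul_smul_comm, map_smul])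
  have hT : ∀ (x : A) (a : S), T x a = f (x * (a : A)) := fun x a => rfl
  let Pd : A →ₗ[k] S := (E.symm : Module.Dual k S →ₗ[k] S).comp T
  have key : ∀ (x : A) (a : S), φ ((Pd x) * a) = f (x * (a : A)) := by
    intro x a
    have : B (Pd x) = T x := by
      show B (E.symm (T x)) = T x
      exact E.apply_symm_apply (T x)
    rw [← hT, ← this, hB]
  refine ⟨(Subalgebra.val S).toLinearMap.comp Pd, ?_, ?_, ?_⟩
  · intro y hy
    have : Pd y = ⟨y, hy⟩ := by
      apply hBinj
      ext a
      rw [hB, hB, key]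
      have : (⟨y, hy⟩ * a : S) = ⟨y * (a : A), mul_mem hy a.2⟩ := rfl
      rw [this, ← hf' ⟨y * (a : A), mul_mem hy a.2⟩]
    simp [this]
  · intro x; exact (Pd x).2
  · intro x c hc
    have : Pd (x * c) = Pd x * ⟨c, hc⟩ := by
      apply hBinj
      ext a
      rw [hB, hB, key, mul_assoc, mul_assoc (Pd x), key]
      rfl
    simp [this]

end LocallyFrobAux
namespace LocallyFrobAux

open Module LinearMap Finset

variable {k A : Type*} [Field k] [Ring A] [Algebra k A]

/-- Dimension multiplicativity: if `W` is "freely spanned by `b` over `V`" with coefficients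
controlled in `S`, then `dim W = r * dim V`. -/
lemma finrank_eq_mul {N r : ℕ} (b : Fin r → A) (S : Subalgebra k A)
    (V W : Submodule k (Fin N → A)) [FiniteDimensional k V]
    (huniq : ∀ c c' : Fin r → A, (∀ t, c t ∈ S) → (∀ t, c' t ∈ S) →
      (∑ t, b t * c t) = ∑ t, b t * c' t → c = c')
    (hV : ∀ v ∈ V, ∀ p, v p ∈ S)
    (hVW : ∀ (t : Fin r), ∀ v ∈ V, (fun p => b t * v p) ∈ W)
    (hWV : ∀ w ∈ W, ∃ c : Fin r → (Fin N → A), (∀ t, c t ∈ V) ∧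
      w = fun p => ∑ t, b t * c t p) :
    Module.finrank k W = r * Module.finrank k V := by
  classical
  let Θ : (Fin r → V) →ₗ[k] (Fin N → A) := {
    toFun := fun c => fun p => ∑ t, b t * (c t : Fin N → A) p
    map_add' := by
      intro c c'
      funext p
      simp [mul_add, Finset.sum_add_distrib]
    map_smul' := by
      intro α c
      funext p
      simp [Finset.smul_sum, mul_smul_comm] }
  have hΘ : ∀ (c : Fin r → V) (p : Fin N),
      Θ c p = ∑ t, b t * (c t : Fin N → A) p := fun c p => rfl
  have hrange : LinearMap.range Θ = W := by
    apply le_antisymm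
    · rintro x ⟨c, rfl⟩
      have he : Θ c = ∑ t, (fun p => b t * (c t : Fin N → A) p) := by
        funext p
        rw [hΘ, Finset.sum_apply]
      rw [he]
      exact Submodule.sum_mem _ fun t _ => hVW t _ (c t).2
    · intro w hw
      obtain ⟨c, hc, hw'⟩ := hWV w hw
      refine ⟨fun t => ⟨c t, hc t⟩, ?_⟩
      funext p
      rw [hΘ, hw']
  have hinj : Function.Injective Θ := by
    intro c c' h
    funext t
    apply Subtype.ext
    funext p
    have h1 : (fun t => (c t : Fin N → A) p) = fun t => (c' t : Fin N → A) p := by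
      apply huniq
      · exact fun t => hV _ (c t).2 p
      · exact fun t => hV _ (c' t).2 p
      · have := congrFun h p
        rw [hΘ, hΘ] at this
        exact this
    exact congrFun h1 t
  rw [← hrange, LinearMap.finrank_range_of_inj hinj, Module.finrank_pi_fintype,
    Finset.sum_const, Finset.card_univ, Fintype.card_fin, smul_eq_mul]

end LocallyFrobAux

namespace LocallyFrobAux

variable {k A : Type*} [Field k] [Ring A] [Algebra k A]

lemma exists_ub (LF : LocallyFrobeniusAlgebra k A) (s : Finset LF.ι) :
    ∃ j, ∀ i ∈ s, LF.le i j := by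
  classical
  induction s using Finset.induction_on with
  | empty =>
      obtain ⟨i₀, h, -⟩ := LF.bot
      exact ⟨i₀, by simp⟩
  | @insert a s ha ih =>
      obtain ⟨j, hj⟩ := ih
      obtain ⟨m, ham, hjm⟩ := LF.directed a j
      refine ⟨m, fun x hx => ?_⟩
      rcases Finset.mem_insert.mp hx with rfl | hx
      · exact ham
      · exact LF.le_trans _ _ _ (hj x hx) hjm

lemma exists_ub_family (LF : LocallyFrobeniusAlgebra k A) {σ : Type*} [Fintype σ]
    (f : σ → LF.ι) : ∃ j, ∀ s, LF.le (f s) j := by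
  classical
  obtain ⟨j, hj⟩ := exists_ub LF (Finset.image f Finset.univ)
  exact ⟨j, fun s => hj _ (Finset.mem_image_of_mem f (Finset.mem_univ s))⟩

end LocallyFrobAux


open LocallyFrobAux in
set_option maxHeartbeats 1000000 in
set_option synthInstance.maxHeartbeats 400000 in
/-- Over a locally Frobenius algebra `A`, every nonzero finitely presented (coherent) left
`A`-module is infinite dimensional over `k`; consequently no nonzero finite-dimensional
`A`-module is coherent. -/
theorem coherent_module_infinite_dimensional
    {k A : Type*} [Field k] [Ring A] [Algebra k A]
    (LF : LocallyFrobeniusAlgebra k A)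
    (M : Type*) [AddCommGroup M] [Module k M] [Module A M] [IsScalarTower k A M]
    [Nontrivial M] [Module.FinitePresentation A M] :
    ¬ FiniteDimensional k M := by
  classical
  intro hfd
  haveI : Nontrivial A := by
    rcases subsingleton_or_nontrivial A with hA | hA
    · exfalso
      have hz : ∀ x : M, x = 0 := fun x => by
        rw [← one_smul A x, Subsingleton.elim (1 : A) 0, zero_smul]
      rcases exists_pair_ne M with ⟨x, y, hxy⟩
      exact hxy ((hz x).trans (hz y).symm)
    · exact hA
  -- presentation
  obtain ⟨n, π, hπ⟩ := Module.Finite.exists_fin' A M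
  have hkerfg : (LinearMap.ker π).FG := Module.FinitePresentation.fg_ker π hπ
  obtain ⟨m, g, hg⟩ := Submodule.fg_iff_exists_fin_generating_family.mp hkerfg
  -- n ≠ 0
  have hn : n ≠ 0 := by
    rintro rfl
    haveI : Subsingleton (Fin 0 → A) := by
      constructor; intro a b; funext p; exact absurd p.2 (by omega)
    exact (not_subsingleton_iff_nontrivial.mpr ‹Nontrivial M›) (hπ.subsingleton)
  -- spanning set of M over k and preimages
  obtain ⟨sM, hsM⟩ := hfd.fg_top
  choose sec hsec using hπ
  -- a common index i
  have h1 : ∀ (s : Fin m) (p : Fin n), ∃ i, g s p ∈ LF.sub i := fun s p => LF.exhaustive _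
  choose idx1 hidx1 using h1
  have h2 : ∀ (v : {x // x ∈ sM}) (p : Fin n), ∃ i, sec (v : M) p ∈ LF.sub i :=
    fun v p => LF.exhaustive _
  choose idx2 hidx2 using h2
  obtain ⟨i, hi⟩ := exists_ub_family LF
    (σ := (Fin m × Fin n) ⊕ ({x // x ∈ sM} × Fin n))
    (fun z => Sum.elim (fun y => idx1 y.1 y.2) (fun y => idx2 y.1 y.2) z)
  have hgi : ∀ s p, g s p ∈ LF.sub i :=
    fun s p => LF.mono _ _ (hi (Sum.inl (s, p))) (hidx1 s p)
  have hseci : ∀ (v : {x // x ∈ sM}) p, sec (v : M) p ∈ LF.sub i :=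
    fun v p => LF.mono _ _ (hi (Sum.inr (v, p))) (hidx2 v p)
  haveI := LF.findim i
  -- choose l with bigger dimension, and the basis b
  obtain ⟨l, hil, hlt⟩ := LF.unbounded i (Module.finrank k (LF.sub i))
  haveI := LF.findim l
  obtain ⟨r, b, hbl, hb⟩ := LF.free_right i l hil
  -- uniqueness of coefficients
  have huniq : ∀ c c' : Fin r → A, (∀ t, c t ∈ LF.sub i) → (∀ t, c' t ∈ LF.sub i) →
      (∑ t, b t * c t) = ∑ t, b t * c' t → c = c' := by
    intro c c' hc hc' he
    have hx : (∑ t, b t * c t) ∈ LF.sub l :=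
      Subalgebra.sum_mem _ fun t _ => mul_mem (hbl t) (LF.mono i l hil (hc t))
    obtain ⟨c₀, -, hc₀u⟩ := hb _ hx
    exact (hc₀u c ⟨hc, rfl⟩).trans (hc₀u c' ⟨hc', he⟩).symm
  -- the k-linear version of π
  let πk : (Fin n → A) →ₗ[k] M := π.restrictScalars k
  have hπk : ∀ x, πk x = π x := fun x => rfl
  have hgker : ∀ s, π (g s) = 0 := fun s =>
    LinearMap.mem_ker.mp (hg ▸ Submodule.subset_span ⟨s, rfl⟩)
  -- identification of kernels
  have kerEq : ∀ j, LF.le i j → ∀ x ∈ LinearMap.range (phiMap (LF.sub j) n),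
      (πk x = 0 ↔ x ∈ LinearMap.range (psiMap (LF.sub j) g)) := by
    intro j hij x hx
    constructor
    · intro hx0
      have hxker : x ∈ LinearMap.ker π := LinearMap.mem_ker.mpr hx0
      rw [← hg] at hxker
      obtain ⟨c, hc⟩ := (Submodule.mem_span_range_iff_exists_fun A).mp hxker
      haveI := LF.findim j
      obtain ⟨φ, -, hnd⟩ := LF.frob j
      obtain ⟨P, hPid, hPmem, hPmul⟩ := exists_proj (LF.sub j) φ hnd
      refine ⟨fun s => ⟨P (c s), hPmem _⟩, ?_⟩
      funext p
      have hxp : x p = ∑ s, c s * g s p := by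
        rw [← hc, Finset.sum_apply]
        simp [smul_eq_mul]
      have hxpj : x p ∈ LF.sub j := mem_range_phiMap.mp hx p
      calc psiMap (LF.sub j) g (fun s => (⟨P (c s), hPmem _⟩ : LF.sub j)) p
          = ∑ s, P (c s) * g s p := rfl
        _ = ∑ s, P (c s * g s p) := by
            refine Finset.sum_congr rfl fun s _ => ?_
            rw [hPmul (c s) (g s p) (LF.mono i j hij (hgi s p))]
        _ = P (∑ s, c s * g s p) := (map_sum P _ _).symm
        _ = P (x p) := by rw [hxp]
        _ = x p := hPid _ hxpj
    · rintro ⟨c, rfl⟩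
      have he : psiMap (LF.sub j) g c = ∑ s, ((c s : A)) • g s := by
        funext p
        rw [Finset.sum_apply, psiMap_apply]
        simp [smul_eq_mul]
      rw [hπk, he, map_sum]
      simp only [map_smul, hgker, smul_zero]
      exact Finset.sum_const_zero
  -- the dimension count for j ≥ i
  have count : ∀ j, LF.le i j →
      n * Module.finrank k (LF.sub j) =
        Module.finrank k (LinearMap.range (psiMap (LF.sub j) g)) + Module.finrank k M := by
    intro j hij
    haveI := LF.findim j
    set Sj := LinearMap.range (phiMap (LF.sub j) n) with hSj
    set Dj := LinearMap.range (psiMap (LF.sub j) g) with hDj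
    have hDjSj : Dj ≤ Sj := by
      rintro x ⟨c, rfl⟩
      apply mem_range_phiMap.mpr
      intro p
      rw [psiMap_apply]
      exact Subalgebra.sum_mem _ fun s _ => mul_mem (c s).2 (LF.mono i j hij (hgi s p))
    have hsurj : Function.Surjective (πk.domRestrict Sj) := by
      rw [← LinearMap.range_eq_top, eq_top_iff, ← hsM, Submodule.span_le]
      intro v hv
      refine ⟨⟨sec v, mem_range_phiMap.mpr fun p => LF.mono _ _ hij (hseci ⟨v, hv⟩ p)⟩, ?_⟩
      exact hsec v
    have hker : LinearMap.ker (πk.domRestrict Sj) = Dj.comap Sj.subtype := by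
      ext x
      simp only [LinearMap.mem_ker, LinearMap.domRestrict_apply, Submodule.mem_comap,
        Submodule.coe_subtype]
      exact kerEq j hij x.val x.2
    have h1 := LinearMap.finrank_range_add_finrank_ker (πk.domRestrict Sj)
    rw [LinearMap.range_eq_top.mpr hsurj, finrank_top, hker] at h1
    have h2 : Module.finrank k (Dj.comap Sj.subtype) = Module.finrank k Dj :=
      (Submodule.comapSubtypeEquivOfLe hDjSj).finrank_eq
    rw [h2] at h1
    rw [← finrank_range_phiMap (LF.sub j) n, ← hSj, ← h1, add_comm]
  -- multiplicativity for D
  haveI : FiniteDimensional k (LinearMap.range (psiMap (LF.sub i) g)) := inferInstance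
  have e_mulD : Module.finrank k (LinearMap.range (psiMap (LF.sub l) g)) =
      r * Module.finrank k (LinearMap.range (psiMap (LF.sub i) g)) := by
    apply finrank_eq_mul b (LF.sub i) _ _ huniq
    · rintro v ⟨c, rfl⟩ p
      rw [psiMap_apply]
      exact Subalgebra.sum_mem _ fun s _ => mul_mem (c s).2 (hgi s p)
    · rintro t v ⟨c, rfl⟩
      refine ⟨fun s => ⟨b t * (c s : A), mul_mem (hbl t) (LF.mono i l hil (c s).2)⟩, ?_⟩
      funext p
      rw [psiMap_apply]
      show ∑ s, (b t * (c s : A)) * g s p = b t * psiMap (LF.sub i) g c p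
      rw [psiMap_apply, Finset.mul_sum]
      exact Finset.sum_congr rfl fun s _ => mul_assoc _ _ _
    · rintro w ⟨c, rfl⟩
      have hcs : ∀ s, ∃ e : Fin r → A, (∀ t, e t ∈ LF.sub i) ∧
          (c s : A) = ∑ t, b t * e t := fun s => (hb (c s : A) (c s).2).exists
      choose e he1 he2 using hcs
      refine ⟨fun t => fun p => ∑ s, e s t * g s p, fun t => ?_, ?_⟩
      · exact ⟨fun s => ⟨e s t, he1 s t⟩, rfl⟩
      · funext p
        rw [psiMap_apply]
        calc ∑ s, (c s : A) * g s p = ∑ s, ∑ t, b t * (e s t * g s p) := by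
              refine Finset.sum_congr rfl fun s _ => ?_
              rw [he2 s, Finset.sum_mul]
              exact Finset.sum_congr rfl fun t _ => mul_assoc _ _ _
          _ = ∑ t, ∑ s, b t * (e s t * g s p) := Finset.sum_comm
          _ = ∑ t, b t * ∑ s, e s t * g s p := by
              refine Finset.sum_congr rfl fun t _ => ?_
              rw [Finset.mul_sum]
  -- multiplicativity for S
  have e_mulS : Module.finrank k (LinearMap.range (phiMap (LF.sub l) n)) =
      r * Module.finrank k (LinearMap.range (phiMap (LF.sub i) n)) := by
    apply finrank_eq_mul b (LF.sub i) _ _ huniq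
    · intro v hv p
      exact mem_range_phiMap.mp hv p
    · intro t v hv
      apply mem_range_phiMap.mpr
      intro p
      exact mul_mem (hbl t) (LF.mono i l hil (mem_range_phiMap.mp hv p))
    · intro w hw
      have hcs : ∀ p, ∃ e : Fin r → A, (∀ t, e t ∈ LF.sub i) ∧
          w p = ∑ t, b t * e t := fun p => (hb (w p) (mem_range_phiMap.mp hw p)).exists
      choose e he1 he2 using hcs
      refine ⟨fun t => fun p => e p t, fun t => ?_, ?_⟩
      · exact mem_range_phiMap.mpr fun p => he1 p t
      · funext p
        exact he2 p
  -- conclude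
  have e_i := count i (LF.le_refl i)
  have e_l := count l hil
  rw [e_mulD] at e_l
  -- n * f_l = r * (n * f_i)
  have e_fl : n * Module.finrank k (LF.sub l) = r * (n * Module.finrank k (LF.sub i)) := by
    rw [← finrank_range_phiMap (LF.sub l) n, ← finrank_range_phiMap (LF.sub i) n, e_mulS]
  have hfl : Module.finrank k (LF.sub l) = r * Module.finrank k (LF.sub i) := by
    have := e_fl
    rw [show r * (n * Module.finrank k (LF.sub i)) = n * (r * Module.finrank k (LF.sub i)) by ring]
      at this
    exact Nat.eq_of_mul_eq_mul_left (Nat.pos_of_ne_zero hn) this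
  haveI : Nontrivial (LF.sub i) := ⟨1, 0, fun h => one_ne_zero (α := A) (congrArg Subtype.val h)⟩
  have hfi : 0 < Module.finrank k (LF.sub i) := Module.finrank_pos
  have hr : 2 ≤ r := by
    by_contra hr
    push_neg at hr
    interval_cases r
    · rw [hfl] at hlt; omega
    · rw [hfl, one_mul] at hlt; omega
  -- now derive finrank M = 0
  have final : Module.finrank k M = 0 := by
    have h3 : r * (n * Module.finrank k (LF.sub i)) =
        r * Module.finrank k (LinearMap.range (psiMap (LF.sub i) g)) + Module.finrank k M := by
      rw [← e_fl, e_l]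
    rw [e_i, Nat.mul_add] at h3
    have : Module.finrank k M = r * Module.finrank k M := by omega
    nlinarith [this, hr]
  have : Subsingleton M := Module.finrank_zero_iff.mp final
  exact (not_subsingleton_iff_nontrivial.mpr ‹Nontrivial M›) this
end

section
/- Let A be a locally Frobenius algebra, M a finite-dimensional A-module, and N a coherent A-module. Then Hom_A(M, N) = 0. -/
namespace LFAaux

variable {k A : Type*} [Field k] [Ring A] [Algebra k A]

theorem exists_list (LF : LocallyFrobeniusAlgebra k A) (l : List A) :
    ∃ i, ∀ a ∈ l, a ∈ LF.sub i := by
  induction l with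
  | nil =>
    obtain ⟨i, -⟩ := LF.exhaustive 0
    exact ⟨i, by simp⟩
  | cons a t ih =>
    obtain ⟨i1, h1⟩ := ih
    obtain ⟨i2, h2⟩ := LF.exhaustive a
    obtain ⟨i3, h31, h32⟩ := LF.directed i1 i2
    refine ⟨i3, ?_⟩
    intro x hx
    rcases List.mem_cons.mp hx with rfl | hx
    · exact LF.mono _ _ h32 h2
    · exact LF.mono _ _ h31 (h1 x hx)

theorem exists_fam (LF : LocallyFrobeniusAlgebra k A) {σ : Type*} [Fintype σ]
    (x : σ → A) (i0 : LF.ι) : ∃ i, LF.le i0 i ∧ ∀ t, x t ∈ LF.sub i := by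
  obtain ⟨i1, h1⟩ := exists_list LF ((Finset.univ : Finset σ).toList.map x)
  obtain ⟨i, hi0, hi1⟩ := LF.directed i0 i1
  refine ⟨i, hi0, fun t => LF.mono _ _ hi1 (h1 _ ?_)⟩
  exact List.mem_map.mpr ⟨t, by simp, rfl⟩

end LFAaux

/-- Over a locally Frobenius algebra `A`, there are no nonzero homomorphisms from a
finite-dimensional `A`-module to a coherent (finitely presented) `A`-module. -/
theorem hom_findim_to_coherent_eq_zero
    {k A : Type*} [Field k] [Ring A] [Algebra k A]
    (LF : LocallyFrobeniusAlgebra k A)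
    (M : Type*) [AddCommGroup M] [Module k M] [Module A M] [IsScalarTower k A M]
    [FiniteDimensional k M]
    (N : Type*) [AddCommGroup N] [Module A N] [Module.FinitePresentation A N] :
    ∀ f : M →ₗ[A] N, f = 0 := by
  classical
  intro f
  by_cases hA : (1 : A) = 0
  · ext x
    calc f x = (1 : A) • f x := (one_smul A (f x)).symm
    _ = (0 : A) • f x := by rw [hA]
    _ = 0 := zero_smul A (f x)
  have : Nontrivial A := nontrivial_of_ne 1 0 hA
  -- a finite presentation of N
  obtain ⟨n, s, hs⟩ := Module.Finite.exists_fin (R := A) (M := N)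
  set π : (Fin n → A) →ₗ[A] N := Fintype.linearCombination A s with hπdef
  have hπsurj : Function.Surjective π := by
    rw [← LinearMap.range_eq_top, hπdef, Fintype.range_linearCombination, hs]
  have hker : (LinearMap.ker π).FG := Module.FinitePresentation.fg_ker π hπsurj
  obtain ⟨m, g, hg⟩ := Submodule.fg_iff_exists_fin_generating_family.mp hker
  have hgK : ∀ s', g s' ∈ LinearMap.ker π := by
    intro s'
    rw [← hg]
    exact Submodule.subset_span (Set.mem_range_self s')
  ext x₀
  show f x₀ = 0
  obtain ⟨v, hv⟩ := hπsurj (f x₀)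
  suffices hvK : v ∈ LinearMap.ker π by rw [← hv, LinearMap.mem_ker.mp hvK]
  by_contra hvK
  -- choose an index i containing all entries of v and g
  obtain ⟨ibot, hbot, -⟩ := LF.bot
  obtain ⟨i, -, hi⟩ := LFAaux.exists_fam LF
    (Sum.elim v (fun p : Fin m × Fin n => g p.1 p.2)) ibot
  have hvi : ∀ q, v q ∈ LF.sub i := fun q => hi (Sum.inl q)
  have hgi : ∀ s' q, g s' q ∈ LF.sub i := fun s' q => hi (Sum.inr (s', q))
  set d := Module.finrank k M with hd
  obtain ⟨j, hij, hdim⟩ := LF.unbounded i (d * Module.finrank k (LF.sub i))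
  obtain ⟨r, b, hbmem, hb⟩ := LF.free_right i j hij
  haveI := LF.findim i
  haveI := LF.findim j
  -- d < r
  have hdr : d < r := by
    have hSi1 : 0 < Module.finrank k (LF.sub i) := by
      refine Module.finrank_pos_iff_exists_ne_zero.mpr ⟨⟨1, one_mem _⟩, fun hcon => ?_⟩
      exact hA (congrArg Subtype.val hcon)
    let Φ : (Fin r → LF.sub i) →ₗ[k] LF.sub j :=
      { toFun := fun c => ⟨∑ t, b t * (c t : A), by
          exact sum_mem fun t _ => mul_mem (hbmem t) (LF.mono _ _ hij (c t).2)⟩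
        map_add' := by
          intro c1 c2
          apply Subtype.ext
          push_cast
          rw [← Finset.sum_add_distrib]
          exact Finset.sum_congr rfl fun t _ => by simp [mul_add]
        map_smul' := by
          intro a c
          apply Subtype.ext
          push_cast
          rw [Finset.smul_sum]
          exact Finset.sum_congr rfl fun t _ => by simp [mul_smul_comm] }
    have hΦ : Function.Surjective Φ := by
      rintro ⟨x, hx⟩
      obtain ⟨c, ⟨hcmem, hcx⟩, -⟩ := hb x hx
      exact ⟨fun t => ⟨c t, hcmem t⟩, Subtype.ext hcx.symm⟩
    have hle2 : Module.finrank k (LF.sub j) ≤ Module.finrank k (Fin r → LF.sub i) := by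
      calc Module.finrank k (LF.sub j)
          = Module.finrank k (LinearMap.range Φ) := by
            rw [LinearMap.range_eq_top.mpr hΦ, finrank_top]
        _ ≤ Module.finrank k (Fin r → LF.sub i) := LinearMap.finrank_range_le Φ
    rw [Module.finrank_pi_fintype, Finset.sum_const, Finset.card_univ, Fintype.card_fin,
      smul_eq_mul] at hle2
    exact Nat.lt_of_mul_lt_mul_right (lt_of_lt_of_le hdim hle2)
  -- the key claim
  have key : ∀ lam : Fin r → k,
      f ((∑ p, algebraMap k A (lam p) * b p) • x₀) = 0 → lam = 0 := by
    intro lam hlam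
    set a : A := ∑ p, algebraMap k A (lam p) * b p with ha
    have hamem : a ∈ LF.sub j :=
      sum_mem fun p _ => mul_mem (Subalgebra.algebraMap_mem _ _) (hbmem p)
    have havK : a • v ∈ LinearMap.ker π := by
      rw [LinearMap.mem_ker, map_smul, hv, ← map_smul f, hlam]
    have havK' := havK
    rw [← hg] at havK'
    obtain ⟨c, hc⟩ := (Submodule.mem_span_range_iff_exists_fun A).mp havK'
    obtain ⟨l, hjl, hcl⟩ := LFAaux.exists_fam LF c j
    obtain ⟨U, β, hβmem, hβ⟩ := LF.free_right j l hjl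
    obtain ⟨γ, ⟨hγmem, hγ⟩, -⟩ := hβ 1 (one_mem _)
    choose cc hccmem hcc using fun s' => (hβ (c s') (hcl s')).exists
    have hvj : ∀ q, v q ∈ LF.sub j := fun q => LF.mono _ _ hij (hvi q)
    have hgj : ∀ s' q, g s' q ∈ LF.sub j := fun s' q => LF.mono _ _ hij (hgi s' q)
    have havmem : ∀ q, a * v q ∈ LF.sub j := fun q => mul_mem hamem (hvj q)
    have havq : ∀ q, (a • v) q = a * v q := fun q => rfl
    -- step 1a: coordinates of a • v over the basis β
    have hU1 : ∀ q, (fun u => γ u * (a * v q)) = (fun u => ∑ s', cc s' u * g s' q) := by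
      intro q
      refine ((hβ (a * v q) (LF.mono _ _ hjl (havmem q))).unique
        ⟨fun u => mul_mem (hγmem u) (havmem q), ?_⟩
        ⟨fun u => sum_mem fun s' _ => mul_mem (hccmem s' u) (hgj s' q), ?_⟩)
      · calc a * v q = 1 * (a * v q) := (one_mul _).symm
          _ = (∑ u, β u * γ u) * (a * v q) := by rw [← hγ]
          _ = ∑ u, β u * (γ u * (a * v q)) := by
              rw [Finset.sum_mul]
              exact Finset.sum_congr rfl fun u _ => mul_assoc _ _ _
      · calc a * v q = (∑ s', c s' • g s') q := (havq q).symm.trans (congrFun hc q).symm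
          _ = ∑ s', c s' * g s' q := by simp [Finset.sum_apply]
          _ = ∑ s', (∑ u, β u * cc s' u) * g s' q :=
              Finset.sum_congr rfl fun s' _ => by rw [← hcc s']
          _ = ∑ s', ∑ u, β u * (cc s' u * g s' q) :=
              Finset.sum_congr rfl fun s' _ => by
                rw [Finset.sum_mul]
                exact Finset.sum_congr rfl fun u _ => mul_assoc _ _ _
          _ = ∑ u, β u * (∑ s', cc s' u * g s' q) := by
              rw [Finset.sum_comm]
              exact Finset.sum_congr rfl fun u _ => (Finset.mul_sum _ _ _).symm
    have hUpos : 0 < U := by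
      rcases Nat.eq_zero_or_pos U with h | h
      · exfalso
        apply hA
        subst h
        simp at hγ
      · exact h
    set u0 : Fin U := ⟨0, hUpos⟩ with hu0
    choose hh hhmem hhh using fun u =>
      (hβ (β u0 * β u) (mul_mem (hβmem u0) (hβmem u))).exists
    -- step 1b: 1 is a (sub j)-combination of the γ u
    have hδ : (fun u' => ∑ u, hh u u' * γ u) = (fun u' => if u' = u0 then (1:A) else 0) := by
      refine ((hβ (β u0) (hβmem u0)).unique
        ⟨fun u' => sum_mem fun u _ => mul_mem (hhmem u u') (hγmem u), ?_⟩
        ⟨fun u' => by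
          show (if u' = u0 then (1:A) else 0) ∈ LF.sub j
          by_cases hcase : u' = u0
          · rw [if_pos hcase]; exact one_mem _
          · rw [if_neg hcase]; exact zero_mem _, ?_⟩)
      · calc β u0 = β u0 * 1 := (mul_one _).symm
          _ = β u0 * ∑ u, β u * γ u := by rw [← hγ]
          _ = ∑ u, (β u0 * β u) * γ u := by
              rw [Finset.mul_sum]
              exact Finset.sum_congr rfl fun u _ => (mul_assoc _ _ _).symm
          _ = ∑ u, (∑ u', β u' * hh u u') * γ u :=
              Finset.sum_congr rfl fun u _ => by rw [← hhh u]
          _ = ∑ u, ∑ u', β u' * (hh u u' * γ u) :=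
              Finset.sum_congr rfl fun u _ => by
                rw [Finset.sum_mul]
                exact Finset.sum_congr rfl fun u' _ => mul_assoc _ _ _
          _ = ∑ u', β u' * (∑ u, hh u u' * γ u) := by
              rw [Finset.sum_comm]
              exact Finset.sum_congr rfl fun u' _ => (Finset.mul_sum _ _ _).symm
      · simp [mul_ite, mul_one, mul_zero, Finset.sum_ite_eq']
    have h1γ : (1:A) = ∑ u, hh u u0 * γ u := by
      have h' := congrFun hδ u0
      simp only [if_pos rfl] at h'
      exact h'.symm
    -- step 1c: a • v is a (sub j)-combination of the g s'
    set e : Fin m → A := fun s' => ∑ u, hh u u0 * cc s' u with he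
    have hemem : ∀ s', e s' ∈ LF.sub j :=
      fun s' => sum_mem fun u _ => mul_mem (hhmem u u0) (hccmem s' u)
    have hav2 : ∀ q, a * v q = ∑ s', e s' * g s' q := by
      intro q
      calc a * v q = 1 * (a * v q) := (one_mul _).symm
        _ = (∑ u, hh u u0 * γ u) * (a * v q) := by rw [← h1γ]
        _ = ∑ u, hh u u0 * (γ u * (a * v q)) := by
            rw [Finset.sum_mul]
            exact Finset.sum_congr rfl fun u _ => mul_assoc _ _ _
        _ = ∑ u, hh u u0 * (∑ s', cc s' u * g s' q) :=
            Finset.sum_congr rfl fun u _ => by rw [congrFun (hU1 q) u]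
        _ = ∑ u, ∑ s', hh u u0 * (cc s' u * g s' q) :=
            Finset.sum_congr rfl fun u _ => Finset.mul_sum _ _ _
        _ = ∑ s', ∑ u, (hh u u0 * cc s' u) * g s' q := by
            rw [Finset.sum_comm]
            exact Finset.sum_congr rfl fun s' _ =>
              Finset.sum_congr rfl fun u _ => (mul_assoc _ _ _).symm
        _ = ∑ s', e s' * g s' q :=
            Finset.sum_congr rfl fun s' _ => by rw [he, Finset.sum_mul]
    -- step 2: coordinates over the basis b of sub j over sub i
    choose e' he'mem he' using fun s' => (hb (e s') (hemem s')).exists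
    have hU3 : ∀ q, (fun t => algebraMap k A (lam t) * v q)
        = (fun t => ∑ s', e' s' t * g s' q) := by
      intro q
      refine ((hb (a * v q) (havmem q)).unique
        ⟨fun t => mul_mem (Subalgebra.algebraMap_mem _ _) (hvi q), ?_⟩
        ⟨fun t => sum_mem fun s' _ => mul_mem (he'mem s' t) (hgi s' q), ?_⟩)
      · calc a * v q = ∑ p, (algebraMap k A (lam p) * b p) * v q := by
              rw [ha, Finset.sum_mul]
          _ = ∑ t, b t * (algebraMap k A (lam t) * v q) :=
              Finset.sum_congr rfl fun p _ => by
                rw [Algebra.commutes (lam p) (b p), mul_assoc]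
      · calc a * v q = ∑ s', e s' * g s' q := hav2 q
          _ = ∑ s', (∑ t, b t * e' s' t) * g s' q :=
              Finset.sum_congr rfl fun s' _ => by rw [← he' s']
          _ = ∑ s', ∑ t, b t * (e' s' t * g s' q) :=
              Finset.sum_congr rfl fun s' _ => by
                rw [Finset.sum_mul]
                exact Finset.sum_congr rfl fun t _ => mul_assoc _ _ _
          _ = ∑ t, b t * (∑ s', e' s' t * g s' q) := by
              rw [Finset.sum_comm]
              exact Finset.sum_congr rfl fun t _ => (Finset.mul_sum _ _ _).symm
    -- conclude lam = 0
    funext t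
    show lam t = 0
    by_contra hlt
    apply hvK
    have hrep : algebraMap k A (lam t) • v = ∑ s', e' s' t • g s' := by
      funext q
      calc (algebraMap k A (lam t) • v) q = algebraMap k A (lam t) * v q := rfl
        _ = ∑ s', e' s' t * g s' q := congrFun (hU3 q) t
        _ = (∑ s', e' s' t • g s') q := by simp [Finset.sum_apply]
    have hmem2 : algebraMap k A (lam t) • v ∈ LinearMap.ker π := by
      rw [hrep]
      exact sum_mem fun s' _ => Submodule.smul_mem _ _ (hgK s')
    have hvv : v = algebraMap k A (lam t)⁻¹ • (algebraMap k A (lam t) • v) := by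
      rw [smul_smul, ← map_mul, inv_mul_cancel₀ hlt, map_one, one_smul]
    rw [hvv]
    exact Submodule.smul_mem _ _ hmem2
  -- derive the contradiction
  have hcontra : r ≤ d := by
    let p' : Submodule k M := (LinearMap.ker f).restrictScalars k
    let Flin : (Fin r → k) →ₗ[k] M :=
      { toFun := fun lam => (∑ p, algebraMap k A (lam p) * b p) • x₀
        map_add' := by
          intro l1 l2
          show (∑ p, algebraMap k A ((l1 + l2) p) * b p) • x₀ = _ + _
          have hcoef : (∑ p, algebraMap k A ((l1 + l2) p) * b p)
              = (∑ p, algebraMap k A (l1 p) * b p) + (∑ p, algebraMap k A (l2 p) * b p) := by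
            rw [← Finset.sum_add_distrib]
            exact Finset.sum_congr rfl fun p _ => by
              rw [Pi.add_apply, map_add, add_mul]
          rw [hcoef, add_smul]
        map_smul' := by
          intro a lam
          show (∑ p, algebraMap k A ((a • lam) p) * b p) • x₀ = a • _
          have hcoef : (∑ p, algebraMap k A ((a • lam) p) * b p)
              = algebraMap k A a * ∑ p, algebraMap k A (lam p) * b p := by
            rw [Finset.mul_sum]
            exact Finset.sum_congr rfl fun p _ => by
              rw [Pi.smul_apply, smul_eq_mul, map_mul, mul_assoc]
          rw [hcoef, mul_smul, algebraMap_smul] }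
    let F : (Fin r → k) →ₗ[k] M ⧸ p' := (Submodule.mkQ p').comp Flin
    have hFinj : Function.Injective F := by
      rw [← LinearMap.ker_eq_bot, LinearMap.ker_eq_bot']
      intro lam hlam
      apply key lam
      have hmem : Flin lam ∈ p' := by
        have := hlam
        rw [LinearMap.comp_apply, Submodule.mkQ_apply,
          Submodule.Quotient.mk_eq_zero] at this
        exact this
      exact hmem
    have h1 := LinearMap.finrank_le_finrank_of_injective hFinj
    rw [Module.finrank_pi, Fintype.card_fin] at h1
    exact h1.trans (Submodule.finrank_quotient_le p')
  omega
end
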